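/- For the mean-field Glauber magnetization generator drift 𝓕_N(m,h) = (2/N)(c⁺(m,h) − c⁻(m,h)), where c^±(m,h) = (N/2)(1∓m)·e^{±β[h+(m±1/N)]}/(e^{−β[h+(m±1/N)]} + e^{β[h+(m±1/N)]}), there exists c > 0 such that |𝓕_N(m,h) − F(m,h)| ≤ c/N uniformly in m ∈ [−1,1] and |h| ≤ h_c, for all N large enough, where F(m,h) = −m + tanh(β(m+h)). -/

import Mathlib

/-!
Writing `e^{x}/(e^{-x}+e^{x}) = (1 + tanh x)/2`, the microscopic drift becomes
`(1-m)/2 · (1 + tanh(t + β/N)) - (1+m)/2 · (1 - tanh(t - β/N))` with `t = β(m+h)`, while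
`F(m,h) = (1-m)/2 · (1 + tanh t) - (1+m)/2 · (1 - tanh t)`. Since `tanh` is `1`-Lipschitz and
the weights `(1 ∓ m)/2` are nonnegative with sum `1`, the difference is at most `β/N`.
-/

open Real Set

namespace Real

theorem hasDerivAt_tanh (x : ℝ) : HasDerivAt tanh (1 / cosh x ^ 2) x := by
  have h := (hasDerivAt_sinh x).div (hasDerivAt_cosh x) (cosh_pos x).ne'
  rw [← sq, ← sq, cosh_sq_sub_sinh_sq] at h
  rwa [show sinh / cosh = tanh from funext fun y => (tanh_eq_sinh_div_cosh y).symm] at h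

theorem lipschitzWith_tanh : LipschitzWith 1 tanh := by
  refine lipschitzWith_of_nnnorm_deriv_le (fun x => (hasDerivAt_tanh x).differentiableAt)
    fun x => ?_
  rw [(hasDerivAt_tanh x).deriv, ← NNReal.coe_le_coe, coe_nnnorm, norm_eq_abs,
    abs_of_pos (by positivity), NNReal.coe_one, div_le_one (by positivity)]
  nlinarith [one_le_cosh x]

theorem abs_tanh_sub_tanh_le (a b : ℝ) : |tanh a - tanh b| ≤ |a - b| := by
  simpa [dist_eq] using lipschitzWith_tanh.dist_le_mul a b

theorem exp_div_exp_neg_add_exp (x : ℝ) :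
    exp x / (exp (-x) + exp x) = (1 + tanh x) / 2 := by
  rw [tanh_eq]
  field_simp
  ring

theorem exp_neg_div_exp_neg_add_exp (x : ℝ) :
    exp (-x) / (exp (-x) + exp x) = (1 - tanh x) / 2 := by
  rw [tanh_eq]
  field_simp
  ring

end Real

theorem abs_glauberDrift_tanh_sub_le {m : ℝ} (hm : m ∈ Icc (-1) 1) (t δ : ℝ) :
    |(1 - m) * ((1 + tanh (t + δ)) / 2) - (1 + m) * ((1 - tanh (t - δ)) / 2)
      - (-m + tanh t)| ≤ |δ| := by
  have hplus : |tanh (t + δ) - tanh t| ≤ |δ| := by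
    simpa using abs_tanh_sub_tanh_le (t + δ) t
  have hminus : |tanh (t - δ) - tanh t| ≤ |δ| := by
    simpa using abs_tanh_sub_tanh_le (t - δ) t
  have hw₁ : 0 ≤ (1 - m) / 2 := by linarith [hm.2]
  have hw₂ : 0 ≤ (1 + m) / 2 := by linarith [hm.1]
  calc _ = |(1 - m) / 2 * (tanh (t + δ) - tanh t) + (1 + m) / 2 * (tanh (t - δ) - tanh t)| := by
          ring_nf
    _ ≤ (1 - m) / 2 * |tanh (t + δ) - tanh t| + (1 + m) / 2 * |tanh (t - δ) - tanh t| := by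
          grw [abs_add_le, abs_mul, abs_mul, abs_of_nonneg hw₁, abs_of_nonneg hw₂]
    _ ≤ (1 - m) / 2 * |δ| + (1 + m) / 2 * |δ| := by gcongr
    _ = |δ| := by ring

theorem stmt_11_general (β h_c : ℝ) (hβ : 0 < β) :
    ∃ c > 0, ∃ N₀ : ℕ, ∀ N : ℕ, N₀ ≤ N →
      ∀ m ∈ Set.Icc (-1 : ℝ) 1, ∀ h : ℝ, |h| ≤ h_c →
        |(2 / (N : ℝ)) *
            (((N : ℝ) / 2 * (1 - m) *
                (Real.exp (β * (h + (m + 1 / N))) /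
                  (Real.exp (-(β * (h + (m + 1 / N)))) + Real.exp (β * (h + (m + 1 / N)))))) -
              ((N : ℝ) / 2 * (1 + m) *
                (Real.exp (-(β * (h + (m - 1 / N)))) /
                  (Real.exp (-(β * (h + (m - 1 / N)))) + Real.exp (β * (h + (m - 1 / N)))))))
          - (-m + Real.tanh (β * (m + h)))| ≤ c / N := by
  refine ⟨β, hβ, 1, fun N hN m hm h _ => ?_⟩
  have hN₀ : (N : ℝ) ≠ 0 := by positivity
  rw [exp_div_exp_neg_add_exp, exp_neg_div_exp_neg_add_exp,
    show β * (h + (m + 1 / N)) = β * (m + h) + β / N by ring,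
    show β * (h + (m - 1 / N)) = β * (m + h) - β / N by ring]
  calc _ = |(1 - m) * ((1 + tanh (β * (m + h) + β / N)) / 2)
            - (1 + m) * ((1 - tanh (β * (m + h) - β / N)) / 2) - (-m + tanh (β * (m + h)))| := by
          field_simp
    _ ≤ |β / N| := abs_glauberDrift_tanh_sub_le hm _ _
    _ = β / N := abs_of_pos (by positivity)

/-- The microscopic Glauber drift `𝓕_N(m,h) = (2/N)(c⁺ − c⁻)` is uniformly `c/N`-close to the
macroscopic drift `F(m,h) = −m + tanh(β(m+h))` on `[-1,1] × [-h_c,h_c]`. -/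
theorem stmt_11 (β h_c : ℝ) (hβ : 0 < β) (hhc : 0 < h_c) :
    ∃ c > 0, ∃ N₀ : ℕ, ∀ N : ℕ, N₀ ≤ N →
      ∀ m ∈ Set.Icc (-1 : ℝ) 1, ∀ h : ℝ, |h| ≤ h_c →
        |(2 / (N : ℝ)) *
            (((N : ℝ) / 2 * (1 - m) *
                (Real.exp (β * (h + (m + 1 / N))) /
                  (Real.exp (-(β * (h + (m + 1 / N)))) + Real.exp (β * (h + (m + 1 / N)))))) -
              ((N : ℝ) / 2 * (1 + m) *
                (Real.exp (-(β * (h + (m - 1 / N)))) /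
                  (Real.exp (-(β * (h + (m - 1 / N)))) + Real.exp (β * (h + (m - 1 / N)))))))
          - (-m + Real.tanh (β * (m + h)))| ≤ c / N :=
  stmt_11_general β h_c hβ
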